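/- arXiv:1504.00786 — 2 statements merged into one kernel-verified Lean document; each statement's English description precedes it below -/
import Mathlib

section
/- Let μ be a measure on a metric measure space and suppose there exist constants C₁, C₂ > 0 and D ≥ 1 such that for every x and every 0 < R₀ ≤ R one has μ(B(x,R)) ≤ C₁ R^D / (R₀^D p(x,x,R₀²)) and p(x,x,2R²) ≥ C₂ / μ(B(x,R)), where p denotes a positive heat kernel. Then μ satisfies a volume doubling property: there exists a constant C₄ = C₄(C₁,C₂,D) such that μ(B(x,R)) ≤ C₄ μ(B(x,R/2)) for all x and R > 0. -/
open MeasureTheory Metric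

/-!
Comparing the volume of `B(x, R)` with that of `B(x, r)` only needs one time, `t = 2 r²`: the
on-diagonal lower bound gives `p(x, x, 2 r²) ≥ C₂ / μ(B(x, r))`, and feeding this into the upper
bound at scale `R₀ = √2 r` gives `μ(B(x, R)) ≤ (C₁ / C₂) (R / R₀)^D μ(B(x, r))`. Doubling is the
case `r = R / 2`, where `R / R₀ = √2`.
-/

section HeatKernelBounds

variable {M : Type*} [PseudoMetricSpace M] [MeasurableSpace M]
  {μ : Measure M} {p : M → M → ℝ → ℝ} {C₁ C₂ D : ℝ}

theorem measure_ball_le_mul_measure_ball_of_heat_kernel_bounds (hC₁ : 0 ≤ C₁) (hC₂ : 0 < C₂)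
    (hVpos : ∀ x R, 0 < R → 0 < (μ (ball x R)).toReal)
    (hupper : ∀ x R₀ R, 0 < R₀ → R₀ ≤ R →
      (μ (ball x R)).toReal ≤ C₁ * R ^ D / (R₀ ^ D * p x x (R₀ ^ 2)))
    (hlower : ∀ x R, 0 < R → C₂ / (μ (ball x R)).toReal ≤ p x x (2 * R ^ 2))
    (x : M) {r R : ℝ} (hr : 0 < r) (hrR : √2 * r ≤ R) :
    (μ (ball x R)).toReal ≤ C₁ / C₂ * (R / (√2 * r)) ^ D * (μ (ball x r)).toReal := by
  set R₀ := √2 * r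
  set V := (μ (ball x r)).toReal
  have hR₀ : 0 < R₀ := by positivity
  have hR : 0 < R := hR₀.trans_le hrR
  have hV : 0 < V := hVpos x r hr
  have hp : C₂ / V ≤ p x x (R₀ ^ 2) := by
    rw [mul_pow, Real.sq_sqrt zero_le_two]
    exact hlower x r hr
  calc (μ (ball x R)).toReal ≤ C₁ * R ^ D / (R₀ ^ D * p x x (R₀ ^ 2)) := hupper x R₀ R hR₀ hrR
    _ ≤ C₁ * R ^ D / (R₀ ^ D * (C₂ / V)) := by gcongr
    _ = C₁ / C₂ * (R / R₀) ^ D * V := by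
      rw [Real.div_rpow hR.le hR₀.le]
      field_simp

end HeatKernelBounds

theorem volume_doubling_of_heat_kernel_bounds_general
    {M : Type*} [PseudoMetricSpace M] [MeasurableSpace M]
    (μ : Measure M) (p : M → M → ℝ → ℝ)
    (C₁ C₂ D : ℝ) (hC₁ : 0 < C₁) (hC₂ : 0 < C₂)
    (hVpos : ∀ x R, 0 < R → 0 < (μ (ball x R)).toReal)
    (hupper : ∀ x R₀ R, 0 < R₀ → R₀ ≤ R →
      (μ (ball x R)).toReal ≤ C₁ * R ^ D / (R₀ ^ D * p x x (R₀ ^ 2)))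
    (hlower : ∀ x R, 0 < R →
      C₂ / (μ (ball x R)).toReal ≤ p x x (2 * R ^ 2)) :
    ∃ C₄ : ℝ, 0 < C₄ ∧ ∀ x R, 0 < R →
      (μ (ball x R)).toReal ≤ C₄ * (μ (ball x (R / 2))).toReal := by
  refine ⟨C₁ / C₂ * √2 ^ D, by positivity, fun x R hR => ?_⟩
  have hsqrt_two_le : √2 ≤ 2 := Real.sqrt_le_iff.mpr ⟨zero_le_two, by norm_num⟩
  have hratio : R / (√2 * (R / 2)) = √2 := by
    field_simp
    rw [Real.sq_sqrt zero_le_two]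
  have hscale : √2 * (R / 2) ≤ R := by nlinarith
  simpa only [hratio] using measure_ball_le_mul_measure_ball_of_heat_kernel_bounds hC₁.le hC₂
    hVpos hupper hlower x (half_pos hR) hscale

/-- Volume doubling from the on-diagonal heat kernel upper and lower bounds. -/
theorem volume_doubling_of_heat_kernel_bounds
    {M : Type*} [PseudoMetricSpace M] [MeasurableSpace M]
    (μ : Measure M) (p : M → M → ℝ → ℝ)
    (C₁ C₂ D : ℝ) (hC₁ : 0 < C₁) (hC₂ : 0 < C₂) (hD : 1 ≤ D)
    (hker : ∀ x t, 0 < t → 0 < p x x t)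
    (hVpos : ∀ x R, 0 < R → 0 < (μ (ball x R)).toReal)
    (hupper : ∀ x R₀ R, 0 < R₀ → R₀ ≤ R →
      (μ (ball x R)).toReal ≤ C₁ * R ^ D / (R₀ ^ D * p x x (R₀ ^ 2)))
    (hlower : ∀ x R, 0 < R →
      C₂ / (μ (ball x R)).toReal ≤ p x x (2 * R ^ 2)) :
    ∃ C₄ : ℝ, 0 < C₄ ∧ ∀ x R, 0 < R →
      (μ (ball x R)).toReal ≤ C₄ * (μ (ball x (R / 2))).toReal :=
  volume_doubling_of_heat_kernel_bounds_general μ p C₁ C₂ D hC₁ hC₂ hVpos hupper hlower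
end

section
/- Let (M,d,μ) be a metric measure space with a heat kernel p(x,y,t) satisfying p(x,y,t) ≤ C / μ(B(x,√t)) · exp(−d(x,y)²/(5t)) and the doubling property μ(B(x,R)) ≤ C_D (R/r)^D μ(B(x,r)) for r ≤ R. Fix x ∈ M, R ≥ 1, A > 0 and a > −D−2. If f ≥ 0 is a bounded measurable function with (1/μ(B(x,r))) ∫_{B(x,r)} f dμ ≤ A r^a for all r ≥ R, then u(x,t) := ∫_M p(x,y,t) f(y) dμ(y) satisfies u(x,t) ≤ C(D,a) A t^{a/2} for all t ≥ R². -/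
/-!
Cut `M` into the dyadic shells `2^k √t ≤ d(x,y) < 2^(k+1) √t`. On the `k`-th shell the Gaussian
factor is at most `exp(-4^k/5)`, while the average hypothesis and doubling bound the integral of
`f` over `B(x, 2^(k+1) √t)` by `A C_D (2^(k+1))^(a+D) t^(a/2) μ(B(x, √t))`. The volume factor
cancels the one in the kernel bound, and the super-exponential decay of `exp(-4^k/5)` makes the
series over `k` converge.
-/

open MeasureTheory Metric
open Real Set Filter Topology
open scoped ENNReal

/-- The Gaussian factor on the `k`-th dyadic shell (the `exp(1/5)` lets the shell `k = 0` fit the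
same formula) times the growth `(2^(k+1))^c` of the average and doubling bounds, `c = a + D`. -/
noncomputable def gaussianShellWeight (c : ℝ) (k : ℕ) : ℝ :=
  exp ((1 - 4 ^ k) / 5) * ((2 : ℝ) ^ (k + 1)) ^ c

lemma gaussianShellWeight_pos (c : ℝ) (k : ℕ) : 0 < gaussianShellWeight c k := by
  unfold gaussianShellWeight; positivity

lemma gaussianShellWeight_succ (c : ℝ) (k : ℕ) :
    gaussianShellWeight c (k + 1) = 2 ^ c * exp (-(3 * 4 ^ k / 5)) * gaussianShellWeight c k := by
  have hpow : ((2 : ℝ) ^ (k + 1 + 1)) ^ c = 2 ^ c * ((2 : ℝ) ^ (k + 1)) ^ c := by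
    rw [pow_succ _ (k + 1), mul_comm, mul_rpow (by norm_num) (by positivity)]
  have hexp : exp ((1 - 4 ^ (k + 1)) / 5) = exp (-(3 * 4 ^ k / 5)) * exp ((1 - 4 ^ k) / 5) := by
    rw [← exp_add]; ring_nf
  rw [gaussianShellWeight, gaussianShellWeight, hpow, hexp]
  ring

lemma summable_gaussianShellWeight (c : ℝ) : Summable (gaussianShellWeight c) := by
  refine summable_of_ratio_test_tendsto_lt_one zero_lt_one
    (Eventually.of_forall fun k => (gaussianShellWeight_pos c k).ne') ?_
  have hratio : ∀ k, ‖gaussianShellWeight c (k + 1)‖ / ‖gaussianShellWeight c k‖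
      = 2 ^ c * exp (-(3 * 4 ^ k / 5)) := fun k => by
    rw [norm_of_nonneg (gaussianShellWeight_pos c _).le,
      norm_of_nonneg (gaussianShellWeight_pos c _).le, gaussianShellWeight_succ,
      mul_div_cancel_right₀ _ (gaussianShellWeight_pos c k).ne']
  simp_rw [hratio]
  have hdecay : Tendsto (fun k : ℕ => exp (-(3 * 4 ^ k / 5))) atTop (𝓝 0) :=
    tendsto_exp_atBot.comp <| tendsto_neg_atTop_atBot.comp <|
      ((tendsto_pow_atTop_atTop_of_one_lt (by norm_num)).const_mul_atTop
        (by norm_num)).atTop_div_const (by norm_num)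
  simpa using hdecay.const_mul (2 ^ c)

lemma exists_dyadic_shell {d s : ℝ} (hs : 0 < s) :
    ∃ k : ℕ, d < 2 ^ (k + 1) * s ∧ (4 ^ k - 1) * s ^ 2 ≤ d ^ 2 := by
  rcases lt_or_ge d s with hds | hsd
  · exact ⟨0, by norm_num; linarith, by norm_num; positivity⟩
  obtain ⟨k, hlow, hup⟩ := exists_nat_pow_near ((one_le_div hs).2 hsd) one_lt_two
  refine ⟨k, (div_lt_iff₀ hs).1 hup, ?_⟩
  have hlow' : 2 ^ k * s ≤ d := (le_div_iff₀ hs).1 hlow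
  calc (4 ^ k - 1) * s ^ 2 ≤ 4 ^ k * s ^ 2 := by nlinarith [sq_nonneg s]
    _ = (2 ^ k * s) ^ 2 := by rw [mul_pow, ← pow_mul, mul_comm k 2, pow_mul]; norm_num
    _ ≤ d ^ 2 := pow_le_pow_left₀ (by positivity) hlow' 2

lemma integral_le_of_lintegral_ofReal_le {α : Type*} [MeasurableSpace α] {μ : Measure α}
    {g : α → ℝ} {c : ℝ} (hg : ∀ a, 0 ≤ g a) (hc : 0 ≤ c)
    (h : ∫⁻ a, ENNReal.ofReal (g a) ∂μ ≤ ENNReal.ofReal c) : ∫ a, g a ∂μ ≤ c :=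
  (le_abs_self _).trans <| (norm_integral_le_lintegral_norm g).trans <|
    ENNReal.toReal_le_of_le_ofReal hc <| by simpa only [norm_of_nonneg (hg _)] using h

section DyadicShells

variable {M : Type*} [MetricSpace M] [MeasurableSpace M] {μ : Measure M} {x : M} {s : ℝ}
  {f : M → ℝ} {A C_D D a R : ℝ}

lemma lintegral_gaussian_mul_le_tsum (hs : 0 < s) {g : M → ℝ≥0∞} (hg : Measurable g) :
    ∫⁻ y, ENNReal.ofReal (exp (-dist x y ^ 2 / (5 * s ^ 2))) * g y ∂μ
      ≤ ∑' k : ℕ, ENNReal.ofReal (exp ((1 - 4 ^ k) / 5))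
          * ∫⁻ y in ball x (2 ^ (k + 1) * s), g y ∂μ := by
  -- Balls need not be measurable, so the shells only cover `M` and are not assumed disjoint.
  set shell : ℕ → Set M :=
    fun k => ball x (2 ^ (k + 1) * s) ∩ {y | (4 ^ k - 1) * s ^ 2 ≤ dist x y ^ 2}
  have hcover : ⋃ k, shell k = univ := eq_univ_of_forall fun y => by
    obtain ⟨k, hk⟩ := exists_dyadic_shell (d := dist x y) hs
    exact mem_iUnion.2 ⟨k, mem_ball'.2 hk.1, hk.2⟩
  have hgauss_shell : ∀ k, ∀ y ∈ shell k,
      exp (-dist x y ^ 2 / (5 * s ^ 2)) ≤ exp ((1 - 4 ^ k) / 5) := fun k y hy => by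
    rw [exp_le_exp, div_le_div_iff₀ (by positivity) (by norm_num)]
    have hfar : (4 ^ k - 1) * s ^ 2 ≤ dist x y ^ 2 := hy.2
    linarith
  calc ∫⁻ y, ENNReal.ofReal (exp (-dist x y ^ 2 / (5 * s ^ 2))) * g y ∂μ
      = ∫⁻ y in ⋃ k, shell k, ENNReal.ofReal (exp (-dist x y ^ 2 / (5 * s ^ 2))) * g y ∂μ := by
        rw [hcover, setLIntegral_univ]
    _ ≤ ∑' k, ∫⁻ y in shell k, ENNReal.ofReal (exp (-dist x y ^ 2 / (5 * s ^ 2))) * g y ∂μ :=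
        lintegral_iUnion_le _ _
    _ ≤ ∑' k, ∫⁻ y in shell k, ENNReal.ofReal (exp ((1 - 4 ^ k) / 5)) * g y ∂μ :=
        ENNReal.tsum_le_tsum fun k => setLIntegral_mono (hg.const_mul _) fun y hy => by
          gcongr ENNReal.ofReal ?_ * _; exact hgauss_shell k y hy
    _ ≤ ∑' k : ℕ, ENNReal.ofReal (exp ((1 - 4 ^ k) / 5))
          * ∫⁻ y in ball x (2 ^ (k + 1) * s), g y ∂μ := by
        refine ENNReal.tsum_le_tsum fun k => ?_
        rw [lintegral_const_mul _ hg]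
        gcongr
        exact inter_subset_left


lemma lintegral_ball_le_of_average_le (hs : 0 < s) (hRs : R ≤ s) (hA : 0 ≤ A)
    (hdoubling : ∀ r R', 0 < r → r ≤ R' →
      (μ (ball x R')).toReal ≤ C_D * (R' / r) ^ D * (μ (ball x r)).toReal)
    (havg : ∀ r : ℝ, R ≤ r → ∫ y in ball x r, f y ∂μ ≤ A * r ^ a * (μ (ball x r)).toReal)
    (hf_nonneg : ∀ y, 0 ≤ f y) {ρ : ℝ} (hρ : 1 ≤ ρ) (hf_int : IntegrableOn f (ball x (ρ * s)) μ) :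
    ∫⁻ y in ball x (ρ * s), ENNReal.ofReal (f y) ∂μ
      ≤ ENNReal.ofReal (A * C_D * s ^ a * (μ (ball x s)).toReal * ρ ^ (a + D)) := by
  have hsρ : s ≤ ρ * s := le_mul_of_one_le_left hs.le hρ
  rw [← ofReal_integral_eq_lintegral_ofReal hf_int (ae_of_all _ hf_nonneg)]
  refine ENNReal.ofReal_le_ofReal ?_
  calc ∫ y in ball x (ρ * s), f y ∂μ ≤ A * (ρ * s) ^ a * (μ (ball x (ρ * s))).toReal :=
        havg _ (hRs.trans hsρ)
    _ ≤ A * (ρ * s) ^ a * (C_D * (ρ * s / s) ^ D * (μ (ball x s)).toReal) := by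
        gcongr; exact hdoubling _ _ hs hsρ
    _ = A * C_D * s ^ a * (μ (ball x s)).toReal * ρ ^ (a + D) := by
        rw [mul_div_cancel_right₀ _ hs.ne', mul_rpow (by linarith) hs.le,
          rpow_add (by linarith)]
        ring

lemma lintegral_gaussian_mul_le (hs : 0 < s) (hRs : R ≤ s) (hA : 0 ≤ A) (hCD : 0 ≤ C_D)
    (hdoubling : ∀ r R', 0 < r → r ≤ R' →
      (μ (ball x R')).toReal ≤ C_D * (R' / r) ^ D * (μ (ball x r)).toReal)
    (havg : ∀ r : ℝ, R ≤ r → ∫ y in ball x r, f y ∂μ ≤ A * r ^ a * (μ (ball x r)).toReal)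
    (hf_meas : Measurable f) (hf_nonneg : ∀ y, 0 ≤ f y)
    (hf_int : ∀ r, 0 < r → IntegrableOn f (ball x r) μ) :
    ∫⁻ y, ENNReal.ofReal (exp (-dist x y ^ 2 / (5 * s ^ 2))) * ENNReal.ofReal (f y) ∂μ
      ≤ ENNReal.ofReal (A * C_D * s ^ a * (μ (ball x s)).toReal
          * ∑' k, gaussianShellWeight (a + D) k) := by
  set K := A * C_D * s ^ a * (μ (ball x s)).toReal
  have hK : 0 ≤ K := by positivity
  calc ∫⁻ y, ENNReal.ofReal (exp (-dist x y ^ 2 / (5 * s ^ 2))) * ENNReal.ofReal (f y) ∂μ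
      ≤ ∑' k : ℕ, ENNReal.ofReal (exp ((1 - 4 ^ k) / 5))
          * ∫⁻ y in ball x (2 ^ (k + 1) * s), ENNReal.ofReal (f y) ∂μ :=
        lintegral_gaussian_mul_le_tsum hs hf_meas.ennreal_ofReal
    _ ≤ ∑' k : ℕ, ENNReal.ofReal (exp ((1 - 4 ^ k) / 5))
          * ENNReal.ofReal (K * ((2 : ℝ) ^ (k + 1)) ^ (a + D)) :=
        ENNReal.tsum_le_tsum fun k => by
          gcongr
          exact lintegral_ball_le_of_average_le hs hRs hA hdoubling havg hf_nonneg
            (one_le_pow₀ one_le_two) (hf_int _ (by positivity))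
    _ = ∑' k, ENNReal.ofReal (K * gaussianShellWeight (a + D) k) := by
        congr 1; funext k
        rw [← ENNReal.ofReal_mul (exp_pos _).le, gaussianShellWeight]
        ring_nf
    _ = ENNReal.ofReal (K * ∑' k, gaussianShellWeight (a + D) k) := by
        rw [← tsum_mul_left, ENNReal.ofReal_tsum_of_nonneg
          (fun k => mul_nonneg hK (gaussianShellWeight_pos _ k).le)
          ((summable_gaussianShellWeight _).mul_left K)]

end DyadicShells

theorem moment_type_estimate_general
    {M : Type*} [MetricSpace M] [MeasurableSpace M]
    (μ : Measure M) (p : M → M → ℝ → ℝ)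
    (C C_D D A a R : ℝ) (x : M)
    (hC : 0 < C) (hCD : 0 < C_D) (hA : 0 < A) (hR : 1 ≤ R)
    (hVpos : ∀ z r, 0 < r → 0 < (μ (ball z r)).toReal)
    (hker_nonneg : ∀ y t, 0 < t → 0 ≤ p x y t)
    (hgauss : ∀ y t, 0 < t →
      p x y t ≤ C / (μ (ball x (Real.sqrt t))).toReal
          * Real.exp (-(dist x y) ^ 2 / (5 * t)))
    (hdoubling : ∀ z r R', 0 < r → r ≤ R' →
      (μ (ball z R')).toReal ≤ C_D * (R' / r) ^ D * (μ (ball z r)).toReal)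
    (f : M → ℝ) (hf_meas : Measurable f) (hf_nonneg : ∀ y, 0 ≤ f y)
    (hf_bdd : ∃ B : ℝ, ∀ y, f y ≤ B)
    (havg : ∀ r : ℝ, R ≤ r →
      (∫ y in ball x r, f y ∂μ) ≤ A * r ^ a * (μ (ball x r)).toReal) :
    ∃ K : ℝ, 0 < K ∧ ∀ t : ℝ, R ^ 2 ≤ t →
      (∫ y, p x y t * f y ∂μ) ≤ K * A * t ^ (a / 2) := by
  obtain ⟨B, hB⟩ := hf_bdd
  have hf_int : ∀ r, 0 < r → IntegrableOn f (ball x r) μ := fun r hr =>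
    Measure.integrableOn_of_bounded (ENNReal.toReal_pos_iff.1 (hVpos x r hr)).2.ne
      hf_meas.aestronglyMeasurable (M := B)
      (ae_of_all _ fun y => (norm_of_nonneg (hf_nonneg y)).trans_le (hB y))
  set W := ∑' k, gaussianShellWeight (a + D) k
  have hW : 0 < W := (summable_gaussianShellWeight _).tsum_pos
    (fun k => (gaussianShellWeight_pos _ k).le) 0 (gaussianShellWeight_pos _ 0)
  refine ⟨C * C_D * W, by positivity, fun t ht => ?_⟩
  have ht0 : 0 < t := by nlinarith
  have hs : 0 < √t := sqrt_pos.2 ht0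
  have hRs : R ≤ √t := le_sqrt_of_sq_le ht
  have hsa : √t ^ a = t ^ (a / 2) := by rw [sqrt_eq_rpow, ← rpow_mul ht0.le]; ring_nf
  set V := (μ (ball x √t)).toReal
  have hV : 0 < V := hVpos x _ hs
  refine integral_le_of_lintegral_ofReal_le
    (fun y => mul_nonneg (hker_nonneg y t ht0) (hf_nonneg y)) (by positivity) ?_
  calc ∫⁻ y, ENNReal.ofReal (p x y t * f y) ∂μ
      ≤ ∫⁻ y, ENNReal.ofReal (C / V) * (ENNReal.ofReal (exp (-dist x y ^ 2 / (5 * √t ^ 2)))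
          * ENNReal.ofReal (f y)) ∂μ := lintegral_mono fun y => by
        rw [← ENNReal.ofReal_mul (exp_pos _).le, ← ENNReal.ofReal_mul (by positivity),
          sq_sqrt ht0.le, ← mul_assoc]
        exact ENNReal.ofReal_le_ofReal (mul_le_mul_of_nonneg_right (hgauss y t ht0) (hf_nonneg y))
    _ = ENNReal.ofReal (C / V) * ∫⁻ y, ENNReal.ofReal (exp (-dist x y ^ 2 / (5 * √t ^ 2)))
          * ENNReal.ofReal (f y) ∂μ := lintegral_const_mul' _ _ ENNReal.ofReal_ne_top
    _ ≤ ENNReal.ofReal (C / V) * ENNReal.ofReal (A * C_D * √t ^ a * V * W) := by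
        gcongr
        exact lintegral_gaussian_mul_le hs hRs hA.le hCD.le (hdoubling x) havg hf_meas hf_nonneg
          hf_int
    _ = ENNReal.ofReal (C * C_D * W * A * t ^ (a / 2)) := by
        rw [← ENNReal.ofReal_mul (by positivity), ← hsa]
        congr 1
        field_simp

/-- CR moment-type estimate, abstracted to a metric measure space with a Gaussian heat kernel
upper bound and volume doubling: if the averages of a nonnegative bounded function `f` over
balls of radius `r ≥ R` grow at most like `A r^a` with `a > -D-2`, then the heat evolution
`u(x,t) = ∫ p(x,y,t) f(y) dμ(y)` satisfies `u(x,t) ≤ C(D,a) A t^(a/2)` for `t ≥ R²`. -/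
theorem moment_type_estimate
    {M : Type*} [MetricSpace M] [MeasurableSpace M]
    (μ : Measure M) (p : M → M → ℝ → ℝ)
    (C C_D D A a R : ℝ) (x : M)
    (hC : 0 < C) (hCD : 0 < C_D) (hD : 0 < D) (hA : 0 < A) (hR : 1 ≤ R)
    (ha : -D - 2 < a)
    (hVpos : ∀ z r, 0 < r → 0 < (μ (ball z r)).toReal)
    (hker_nonneg : ∀ y t, 0 < t → 0 ≤ p x y t)
    (hgauss : ∀ y t, 0 < t →
      p x y t ≤ C / (μ (ball x (Real.sqrt t))).toReal
          * Real.exp (-(dist x y) ^ 2 / (5 * t)))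
    (hdoubling : ∀ z r R', 0 < r → r ≤ R' →
      (μ (ball z R')).toReal ≤ C_D * (R' / r) ^ D * (μ (ball z r)).toReal)
    (f : M → ℝ) (hf_meas : Measurable f) (hf_nonneg : ∀ y, 0 ≤ f y)
    (hf_bdd : ∃ B : ℝ, ∀ y, f y ≤ B)
    (havg : ∀ r : ℝ, R ≤ r →
      (∫ y in ball x r, f y ∂μ) ≤ A * r ^ a * (μ (ball x r)).toReal) :
    ∃ K : ℝ, 0 < K ∧ ∀ t : ℝ, R ^ 2 ≤ t →
      (∫ y, p x y t * f y ∂μ) ≤ K * A * t ^ (a / 2) :=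
  moment_type_estimate_general μ p C C_D D A a R x hC hCD hA hR hVpos hker_nonneg hgauss hdoubling f
    hf_meas hf_nonneg hf_bdd havg
end
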